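/- Let T be a join tree of an acyclic join J and Σ the set of child-to-parent and parent-to-child tgds of T (shared attributes equated, non-shared right-hand-side attributes existential). If a finite database D satisfies all tgds in Σ, then D is fully reduced: every tuple of every relation of D is the projection of some tuple in the output of the full join J(D). -/

import Mathlib

/-- A rooted tree on node type `ι`: a parent function such that the root is its own
parent and every node reaches the root by iterating `parent`. -/
structure RTree (ι : Type) where
  parent : ι → ι
  root : ι
  parent_root : parent root = root
  reach : ∀ i, ∃ n, parent^[n] i = root

/-- A subset `C` of nodes induces a connected subgraph of the tree. -/
def RTree.ConnIn {ι : Type} (t : RTree ι) (C : Set ι) : Prop :=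
  ∀ i ∈ C, ∀ j ∈ C,
    Relation.ReflTransGen
      (fun x y => (t.parent x = y ∨ t.parent y = x) ∧ x ∈ C ∧ y ∈ C) i j

/-- The rooted tree `t` is a join tree for the schemas `sch`: for every attribute,
the set of nodes whose schema contains it is connected in `t`. -/
def IsJoinRTree {ι α : Type} (t : RTree ι) (sch : ι → Set α) : Prop :=
  ∀ a : α, t.ConnIn {i | a ∈ sch i}

/-- The tgd from relation `i` to relation `j` (variables on shared attributes equated,
remaining right-hand-side attributes existentially quantified) is satisfied in `D`:
every tuple of `D i` agrees on the shared attributes with some tuple of `D j`. -/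
def TgdSat {ι α V : Type} (sch : ι → Set α) (D : ι → Set (α → V)) (i j : ι) : Prop :=
  ∀ u ∈ D i, ∃ w ∈ D j, ∀ a ∈ sch i ∩ sch j, u a = w a

/-- `D` satisfies the set `Σ` of all child-to-parent and parent-to-child tgds of the
tree `t`. -/
def SatSigma {ι α V : Type} (t : RTree ι) (sch : ι → Set α)
    (D : ι → Set (α → V)) : Prop :=
  ∀ i, i ≠ t.root → TgdSat sch D i (t.parent i) ∧ TgdSat sch D (t.parent i) i

/-- The active domain of the database `D`: values appearing in some tuple at some
attribute of its relation's schema. -/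
def Adom {ι α V : Type} (sch : ι → Set α) (D : ι → Set (α → V)) : Set V :=
  {v | ∃ i, ∃ u ∈ D i, ∃ a ∈ sch i, u a = v}

open Classical in
/-- A chase step for the child-to-parent / parent-to-child tgds of the tree `t`:
some tgd `i → j` of `Σ` is violated by a tuple `u` of `D i`, and a new tuple `w` is
added to `D j`, agreeing with `u` on the shared attributes and taking distinct fresh
constants (values outside the active domain) on the remaining attributes of `sch j`. -/
def ChaseStep {ι α V : Type} (t : RTree ι) (sch : ι → Set α)
    (D D' : ι → Set (α → V)) : Prop :=
  ∃ i j, ((j = t.parent i ∧ i ≠ t.root) ∨ (i = t.parent j ∧ j ≠ t.root)) ∧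
    ∃ u ∈ D i, (¬ ∃ w ∈ D j, ∀ a ∈ sch i ∩ sch j, u a = w a) ∧
    ∃ w : α → V, (∀ a ∈ sch i ∩ sch j, w a = u a) ∧
      (∀ a ∈ sch j \ sch i, w a ∉ Adom sch D) ∧
      (∀ a ∈ sch j \ sch i, ∀ b ∈ sch j \ sch i, a ≠ b → w a ≠ w b) ∧
      D' = fun k => if k = j then D j ∪ {w} else D k

/-- A tuple `t` agrees with tuple `u` on the attribute set `S`. -/
def Agrees {α V : Type} (S : Set α) (t u : α → V) : Prop := ∀ a ∈ S, t a = u a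

/-- The output of the natural join of the relations `R i` with schemas `sch i`. -/
def JoinOut {ι α V : Type} (sch : ι → Set α) (R : ι → Set (α → V)) : Set (α → V) :=
  { t | ∀ i, ∃ u ∈ R i, Agrees (sch i) t u }

/-- A database is fully reduced if every tuple of every relation is the projection of
some tuple in the full join output. -/
def FullyReduced {ι α V : Type} (sch : ι → Set α) (R : ι → Set (α → V)) : Prop :=
  ∀ i, ∀ u ∈ R i, ∃ tt ∈ JoinOut sch R, Agrees (sch i) tt u

open Classical in
noncomputable def chainG {ι α V : Type} (t : RTree ι) (sch : ι → Set α)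
    (D : ι → Set (α → V)) (hsat : SatSigma t sch D) (i : ι) (u : α → V) (hu : u ∈ D i) :
    ∀ n : ℕ, {v : α → V // v ∈ D (t.parent^[n] i)}
  | 0 => ⟨u, hu⟩
  | n+1 =>
    let prev := chainG t sch D hsat i u hu n
    if h : t.parent^[n] i = t.root then
      ⟨prev.1, by
        have : t.parent^[n+1] i = t.parent^[n] i := by
          rw [Function.iterate_succ_apply', h, t.parent_root, ← h]
        rw [this]; exact prev.2⟩
    else
      ⟨Classical.choose ((hsat _ h).1 prev.1 prev.2), by
        rw [Function.iterate_succ_apply']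
        exact (Classical.choose_spec ((hsat _ h).1 prev.1 prev.2)).1⟩

lemma chainG_agree {ι α V : Type} (t : RTree ι) (sch : ι → Set α)
    (D : ι → Set (α → V)) (hsat : SatSigma t sch D) (i : ι) (u : α → V) (hu : u ∈ D i)
    (n : ℕ) : ∀ a ∈ sch (t.parent^[n] i) ∩ sch (t.parent^[n+1] i),
      (chainG t sch D hsat i u hu n).1 a = (chainG t sch D hsat i u hu (n+1)).1 a := by
  intro a ha
  simp only [chainG]
  split
  · rfl
  · next h =>
    have := (Classical.choose_spec ((hsat _ h).1 (chainG t sch D hsat i u hu n).1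
      (chainG t sch D hsat i u hu n).2)).2
    apply this
    rwa [← Function.iterate_succ_apply' t.parent n i]

namespace RTree
variable {ι : Type} (t : RTree ι)

lemma root_absorb (x : ι) {n m : ℕ} (h : t.parent^[n] x = t.root) (hnm : n ≤ m) :
    t.parent^[m] x = t.root := by
  obtain ⟨k, rfl⟩ := Nat.exists_eq_add_of_le hnm
  rw [Nat.add_comm, Function.iterate_add_apply, h, Function.iterate_fixed t.parent_root]

lemma no_cycle (y : ι) {p : ℕ} (hp : 0 < p) (hcyc : t.parent^[p] y = y) : y = t.root := by
  obtain ⟨q, hq⟩ := t.reach y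
  have h1 : t.parent^[p*q] y = y := by
    rw [Function.iterate_mul]; exact Function.iterate_fixed hcyc q
  have h2 : t.parent^[p*q] y = t.root :=
    t.root_absorb y hq (Nat.le_mul_of_pos_left q hp)
  rw [← h1, h2]

end RTree

/-- Phase 2: extend a consistent partial assignment on an ancestor-closed set
containing the root to the whole tree. -/
lemma extend_aux {ι α V : Type} [Fintype ι] (t : RTree ι) (sch : ι → Set α)
    (D : ι → Set (α → V)) (hsat : SatSigma t sch D) :
    ∀ (n : ℕ) (S : Finset ι) (f : ι → α → V), Fintype.card ι - S.card ≤ n →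
      t.root ∈ S → (∀ k ∈ S, t.parent k ∈ S) → (∀ k ∈ S, f k ∈ D k) →
      (∀ k ∈ S, k ≠ t.root → ∀ a ∈ sch k ∩ sch (t.parent k), f k a = f (t.parent k) a) →
      ∃ f' : ι → α → V, (∀ k ∈ S, f' k = f k) ∧ (∀ k, f' k ∈ D k) ∧
        (∀ k, k ≠ t.root → ∀ a ∈ sch k ∩ sch (t.parent k), f' k a = f' (t.parent k) a) := by
  classical
  intro n
  induction n with
  | zero =>
    intro S f hcard hroot hclose hmem hedge
    have hS : S = Finset.univ := by
      apply Finset.eq_univ_of_card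
      have := Finset.card_le_univ S
      omega
    refine ⟨f, fun k _ => rfl, fun k => hmem k (hS ▸ Finset.mem_univ k), ?_⟩
    intro k hk a ha
    exact hedge k (hS ▸ Finset.mem_univ k) hk a ha
  | succ n ih =>
    intro S f hcard hroot hclose hmem hedge
    by_cases hS : S = Finset.univ
    · refine ⟨f, fun k _ => rfl, fun k => hmem k (hS ▸ Finset.mem_univ k), ?_⟩
      intro k hk a ha
      exact hedge k (hS ▸ Finset.mem_univ k) hk a ha
    · -- find a boundary node k ∉ S with parent k ∈ S
      obtain ⟨m, hm⟩ : ∃ m, m ∉ S := by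
        by_contra h
        push_neg at h
        exact hS (Finset.eq_univ_of_forall h)
      have hex : ∃ q, t.parent^[q] m ∈ S := by
        obtain ⟨q, hq⟩ := t.reach m
        exact ⟨q, hq ▸ hroot⟩
      set q0 := Nat.find hex with hq0
      have hq0pos : q0 ≠ 0 := by
        intro h
        have := Nat.find_spec hex
        rw [← hq0, h] at this
        exact hm this
      set k := t.parent^[q0 - 1] m with hk
      have hkS : k ∉ S := Nat.find_min hex (Nat.sub_lt (Nat.pos_of_ne_zero hq0pos) one_pos)
      have hpk : t.parent k ∈ S := by
        have : t.parent k = t.parent^[q0] m := by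
          rw [hk, ← Function.iterate_succ_apply' t.parent (q0-1) m,
            Nat.succ_eq_add_one, Nat.sub_add_cancel (Nat.pos_of_ne_zero hq0pos)]
        rw [this]; exact Nat.find_spec hex
      have hkroot : k ≠ t.root := by
        intro h
        apply hkS
        have : t.parent k = k := h ▸ t.parent_root
        rwa [this] at hpk
      obtain ⟨w, hwD, hwagree⟩ := (hsat k hkroot).2 (f (t.parent k)) (hmem _ hpk)
      set f' := Function.update f k w with hf'
      have hne : ∀ j ∈ S, j ≠ k := fun j hj h => hkS (h ▸ hj)
      have hf'S : ∀ j ∈ S, f' j = f j := fun j hj => Function.update_of_ne (hne j hj) _ _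
      have hcard' : Fintype.card ι - (insert k S).card ≤ n := by
        have h1 : (insert k S).card = S.card + 1 := Finset.card_insert_of_notMem hkS
        have h2 : (insert k S).card ≤ Fintype.card ι := by
          have := Finset.card_le_univ (insert k S)
          simpa [Finset.card_univ] using this
        omega
      have hmem' : ∀ j ∈ insert k S, f' j ∈ D j := by
        intro j hj
        rcases Finset.mem_insert.1 hj with rfl | hj
        · rw [hf', Function.update_self]; exact hwD
        · rw [hf'S j hj]; exact hmem j hj
      have hclose' : ∀ j ∈ insert k S, t.parent j ∈ insert k S := by
        intro j hj
        rcases Finset.mem_insert.1 hj with rfl | hj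
        · exact Finset.mem_insert_of_mem hpk
        · exact Finset.mem_insert_of_mem (hclose j hj)
      have hedge' : ∀ j ∈ insert k S, j ≠ t.root →
          ∀ a ∈ sch j ∩ sch (t.parent j), f' j a = f' (t.parent j) a := by
        intro j hj hjroot a ha
        rcases Finset.mem_insert.1 hj with rfl | hj
        · rw [hf', Function.update_self, Function.update_of_ne (hne _ hpk)]
          exact (hwagree a ⟨ha.2, ha.1⟩).symm
        · rw [hf'S j hj, hf'S _ (hclose j hj)]
          exact hedge j hj hjroot a ha
      obtain ⟨f'', h1, h2, h3⟩ := ih (insert k S) f' hcard'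
        (Finset.mem_insert_of_mem hroot) hclose' hmem' hedge'
      exact ⟨f'', fun j hj => (h1 j (Finset.mem_insert_of_mem hj)).trans (hf'S j hj), h2, h3⟩

lemma exists_consistent {ι α V : Type} [Fintype ι] (t : RTree ι) (sch : ι → Set α)
    (D : ι → Set (α → V)) (hsat : SatSigma t sch D) (i : ι) (u : α → V) (hu : u ∈ D i) :
    ∃ f : ι → α → V, f i = u ∧ (∀ k, f k ∈ D k) ∧
      (∀ k, k ≠ t.root → ∀ a ∈ sch k ∩ sch (t.parent k), f k a = f (t.parent k) a) := by
  classical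
  set S₀ : Finset ι := Finset.univ.filter (fun k => ∃ n, t.parent^[n] i = k) with hS₀
  set f₀ : ι → α → V := fun k =>
    if h : ∃ n, t.parent^[n] i = k then (chainG t sch D hsat i u hu (Nat.find h)).1 else u
    with hf₀
  have hmemS : ∀ k, k ∈ S₀ ↔ ∃ n, t.parent^[n] i = k := by
    intro k; simp [hS₀]
  have hroot : t.root ∈ S₀ := (hmemS _).2 (t.reach i)
  have hclose : ∀ k ∈ S₀, t.parent k ∈ S₀ := by
    intro k hk
    obtain ⟨n, hn⟩ := (hmemS k).1 hk
    exact (hmemS _).2 ⟨n+1, by rw [Function.iterate_succ_apply', hn]⟩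
  have hval : ∀ (k : ι) (h : ∃ n, t.parent^[n] i = k),
      f₀ k = (chainG t sch D hsat i u hu (Nat.find h)).1 := by
    intro k h; rw [hf₀]; exact dif_pos h
  have hmem : ∀ k ∈ S₀, f₀ k ∈ D k := by
    intro k hk
    have h := (hmemS k).1 hk
    rw [hval k h]
    have h2 := (chainG t sch D hsat i u hu (Nat.find h)).2
    have heq : D (t.parent^[Nat.find h] i) = D k := by rw [Nat.find_spec h]
    exact heq ▸ h2
  have hi : f₀ i = u := by
    have h : ∃ n, t.parent^[n] i = i := ⟨0, rfl⟩
    rw [hval i h]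
    have h0 : Nat.find h = 0 := (Nat.find_eq_zero h).2 rfl
    rw [h0]; rfl
  have hedge : ∀ k ∈ S₀, k ≠ t.root →
      ∀ a ∈ sch k ∩ sch (t.parent k), f₀ k a = f₀ (t.parent k) a := by
    intro k hk hkroot a ha
    have hkh := (hmemS k).1 hk
    set n := Nat.find hkh with hn
    have hnk : t.parent^[n] i = k := Nat.find_spec hkh
    have hsucc : t.parent^[n+1] i = t.parent k := by
      rw [Function.iterate_succ_apply', hnk]
    have hph : ∃ m, t.parent^[m] i = t.parent k := ⟨n+1, hsucc⟩
    have hfindp : Nat.find hph = n + 1 := by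
      have hle : Nat.find hph ≤ n + 1 := Nat.find_le hsucc
      rcases Nat.lt_or_ge (Nat.find hph) (n+1) with hlt | hge
      · exfalso
        set m := Nat.find hph with hm
        have hmk : t.parent^[m] i = t.parent k := Nat.find_spec hph
        have hmn : m ≤ n := Nat.lt_succ_iff.1 hlt
        have hcyc : t.parent^[(n+1) - m] (t.parent^[m] i) = t.parent^[m] i := by
          rw [← Function.iterate_add_apply, Nat.sub_add_cancel (le_trans hmn (Nat.le_succ n)),
            hsucc, hmk]
        have hroot' : t.parent^[m] i = t.root :=
          t.no_cycle _ (by omega) hcyc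
        have : t.parent^[n] i = t.root := t.root_absorb i hroot' hmn
        exact hkroot (hnk ▸ this)
      · omega
    rw [hval k hkh, hval _ hph, ← hn, hfindp]
    apply chainG_agree
    rw [hnk, hsucc]
    exact ha
  obtain ⟨f, hfS, hfD, hfedge⟩ := extend_aux t sch D hsat (Fintype.card ι) S₀ f₀
    (by omega) hroot hclose hmem hedge
  have : i ∈ S₀ := (hmemS i).2 ⟨0, rfl⟩
  exact ⟨f, (hfS i this).trans hi, hfD, hfedge⟩

/-- If a finite database satisfies all the child-to-parent and parent-to-child tgds
of a join tree of an acyclic join, then it is fully reduced. -/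
theorem stmt11 {ι α V : Type} [Fintype ι]
    (t : RTree ι) (sch : ι → Set α) (hjt : IsJoinRTree t sch)
    (D : ι → Set (α → V)) (hfin : ∀ i, (D i).Finite)
    (hsat : SatSigma t sch D) :
    FullyReduced sch D := by
  classical
  intro i u hu
  obtain ⟨f, hfi, hfD, hedge⟩ := exists_consistent t sch D hsat i u hu
  have hcons : ∀ (a : α) (j j' : ι), a ∈ sch j → a ∈ sch j' → f j a = f j' a := by
    intro a j j' hj hj'
    have hstep : ∀ x y : ι, (t.parent x = y ∨ t.parent y = x) →
        a ∈ sch x → a ∈ sch y → f x a = f y a := by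
      intro x y hdir hx hy
      rcases hdir with h | h
      · by_cases hxr : x = t.root
        · rw [← h, hxr, t.parent_root]
        · rw [← h]; exact hedge x hxr a ⟨hx, by rw [h]; exact hy⟩
      · by_cases hyr : y = t.root
        · rw [← h, hyr, t.parent_root]
        · rw [← h]; exact (hedge y hyr a ⟨hy, by rw [h]; exact hx⟩).symm
    have h := hjt a j hj j' hj'
    clear hj hj'
    induction h with
    | refl => rfl
    | tail h1 h2 ih => exact ih.trans (hstep _ _ h2.1 h2.2.1 h2.2.2)
  refine ⟨fun a => if h : ∃ j, a ∈ sch j then f (Classical.choose h) a else u a, ?_, ?_⟩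
  · intro j
    refine ⟨f j, hfD j, ?_⟩
    intro a ha
    have h : ∃ j', a ∈ sch j' := ⟨j, ha⟩
    simp only [dif_pos h]
    exact hcons a _ j (Classical.choose_spec h) ha
  · intro a ha
    have h : ∃ j', a ∈ sch j' := ⟨i, ha⟩
    simp only [dif_pos h]
    rw [hcons a _ i (Classical.choose_spec h) ha, hfi]
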